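/- arXiv:2103.13330 — 3 statements merged into one kernel-verified Lean document; each statement's English description precedes it below -/
import Mathlib

section
/- Let Ω = (0,1)^d with d > 1, let w, f be bounded measurable functions on Ω with w(x) ≥ c₁ > 0 for almost every x and ‖w‖_{L^∞(Ω)} < ∞, let g be a bounded measurable function on ∂Ω, and define L(u) = ½∫_Ω ‖∇u(x)‖₂² dx + ½∫_Ω w(x)u(x)² dx − ∫_Ω f(x)u(x) dx − ∫_{∂Ω} g(y)u(y) dH^{d−1}(y). Suppose u* is a bounded C¹ function with bounded gradient on a neighborhood of the closed cube satisfying the weak formulation: for every bounded C¹ function v with bounded gradient, ∫_Ω ∇u*·∇v dx + ∫_Ω w u* v dx = ∫_Ω f v dx + ∫_{∂Ω} g v dH^{d−1}. Then for every bounded C¹ function u with bounded gradient, (min(c₁,1)/2)·‖u − u*‖²_{H¹(Ω)} ≤ L(u) − L(u*) ≤ (max(‖w‖_{L^∞(Ω)},1)/2)·‖u − u*‖²_{H¹(Ω)}. -/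
open MeasureTheory

noncomputable section

/-- The open unit cube `Ω = (0,1)^d` in `ℝ^d`. -/
def openCube (d : ℕ) : Set (EuclideanSpace ℝ (Fin d)) := {x | ∀ i, x i ∈ Set.Ioo (0:ℝ) 1}

/-- The closed unit cube `[0,1]^d` in `ℝ^d`. -/
def closedCube (d : ℕ) : Set (EuclideanSpace ℝ (Fin d)) := {x | ∀ i, x i ∈ Set.Icc (0:ℝ) 1}

/-- `u` is a bounded `C¹` function with bounded gradient on a neighborhood of the closed cube. -/
def IsNice (d : ℕ) (u : EuclideanSpace ℝ (Fin d) → ℝ) : Prop :=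
  ∃ U : Set (EuclideanSpace ℝ (Fin d)), IsOpen U ∧ closedCube d ⊆ U ∧ ContDiffOn ℝ 1 u U ∧
    (∃ C, ∀ x ∈ U, |u x| ≤ C) ∧ (∃ C, ∀ x ∈ U, ‖gradient u x‖ ≤ C)

/-- The Ritz energy functional
`L(u) = ½∫_Ω ‖∇u‖² + ½∫_Ω w u² − ∫_Ω f u − ∫_{∂Ω} g u dH^{d-1}`. -/
def ritzEnergy (d : ℕ) (w f g : EuclideanSpace ℝ (Fin d) → ℝ)
    (u : EuclideanSpace ℝ (Fin d) → ℝ) : ℝ :=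
  (1/2) * (∫ x in openCube d, ‖gradient u x‖^2) +
    (1/2) * (∫ x in openCube d, w x * (u x)^2) -
    (∫ x in openCube d, f x * u x) -
    ∫ y in frontier (openCube d), g y * u y ∂(μH[(d:ℝ) - 1])

/-- `ustar` satisfies the weak formulation of the Neumann problem
`−Δu + wu = f` in `Ω`, `∂u/∂n = g` on `∂Ω`, tested against all bounded `C¹`
functions with bounded gradient. -/
def IsWeakSol (d : ℕ) (w f g ustar : EuclideanSpace ℝ (Fin d) → ℝ) : Prop :=
  ∀ v : EuclideanSpace ℝ (Fin d) → ℝ, IsNice d v →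
    (∫ x in openCube d, (inner ℝ (gradient ustar x) (gradient v x) : ℝ)) +
      (∫ x in openCube d, w x * ustar x * v x) =
    (∫ x in openCube d, f x * v x) +
      ∫ y in frontier (openCube d), g y * v y ∂(μH[(d:ℝ) - 1])

/-- The squared `H¹(Ω)` norm `∫_Ω u² + ∫_Ω ‖∇u‖²`. -/
def H1normSq (d : ℕ) (u : EuclideanSpace ℝ (Fin d) → ℝ) : ℝ :=
  (∫ x in openCube d, (u x)^2) + ∫ x in openCube d, ‖gradient u x‖^2

/-!
Write `u = u* + e`. Since `L` is quadratic, `L(u) - L(u*)` equals `½∫‖∇e‖² + ½∫ w e²` plus the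
linear term `∫ ∇u*·∇e + ∫ w u* e - ∫ f e - ∫_{∂Ω} g e`, which vanishes because `e` is itself an
admissible test function of the weak formulation. The a.e. bounds `c₁ ≤ w ≤ ‖w‖_∞` then squeeze
the remaining quadratic form between multiples of `‖e‖²_{H¹}`. All integrals are finite:
admissible functions and their gradients are continuous on the compact closed cube, and `∂Ω`, a
union of `2d` Lipschitz images of `[0,1]^{d-1}`, has finite `H^{d-1}` measure.
-/

open Set

lemma gradient_sub {E : Type*} [NormedAddCommGroup E] [InnerProductSpace ℝ E] [CompleteSpace E]
    {u v : E → ℝ} {x : E} (hu : DifferentiableAt ℝ u x) (hv : DifferentiableAt ℝ v x) :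
    gradient (u - v) x = gradient u x - gradient v x := by
  simp only [gradient, fderiv_sub hu hv, map_sub]

lemma ContDiffOn.continuousOn_gradient {E : Type*} [NormedAddCommGroup E]
    [InnerProductSpace ℝ E] [CompleteSpace E] {u : E → ℝ} {U : Set E} (hU : IsOpen U)
    (hu : ContDiffOn ℝ 1 u U) : ContinuousOn (gradient u) U :=
  (InnerProductSpace.toDual ℝ E).symm.continuous.comp_continuousOn
    (hu.continuousOn_fderiv_of_isOpen hU le_rfl)

lemma ContinuousOn.integrableOn_of_measure_lt_top {α : Type*} [TopologicalSpace α] [T2Space α]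
    [MeasurableSpace α] [OpensMeasurableSpace α] {μ : Measure α} {K : Set α} {F : α → ℝ}
    (hF : ContinuousOn F K) (hK : IsCompact K) (hμ : μ K < ⊤) : IntegrableOn F K μ := by
  obtain ⟨C, hC⟩ := hK.exists_bound_of_continuousOn hF
  exact .of_bound hμ (hF.aestronglyMeasurable hK.measurableSet) C
    (ae_restrict_of_forall_mem hK.measurableSet hC)

lemma IntegrableOn.mul_of_bounded {α : Type*} [MeasurableSpace α] {μ : Measure α} {s : Set α}
    {φ F : α → ℝ} (hF : IntegrableOn F s μ) (hs : MeasurableSet s)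
    (hφ : AEStronglyMeasurable φ (μ.restrict s)) (hφb : ∃ C, ∀ x ∈ s, |φ x| ≤ C) :
    IntegrableOn (fun x => φ x * F x) s μ := by
  obtain ⟨C, hC⟩ := hφb
  exact hF.bdd_mul hφ (ae_restrict_of_forall_mem hs hC)

lemma integral_add_two_mul_add {α : Type*} [MeasurableSpace α] {μ : Measure α} {F G H : α → ℝ}
    (hF : Integrable F μ) (hG : Integrable G μ) (hH : Integrable H μ) :
    ∫ x, F x + 2 * G x + H x ∂μ = ∫ x, F x ∂μ + 2 * ∫ x, G x ∂μ + ∫ x, H x ∂μ := by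
  rw [integral_add ?_ hH, integral_add hF (hG.const_mul 2), integral_const_mul]
  exact hF.add (hG.const_mul 2)

section WeightedIntegral

variable {α : Type*} [MeasurableSpace α] {μ : Measure α} {c : ℝ} {φ F : α → ℝ}

lemma const_mul_integral_le_integral_mul (hφ : ∀ᵐ x ∂μ, c ≤ φ x) (hF : ∀ x, 0 ≤ F x)
    (hFi : Integrable F μ) (hφF : Integrable (fun x => φ x * F x) μ) :
    c * ∫ x, F x ∂μ ≤ ∫ x, φ x * F x ∂μ := by
  rw [← integral_const_mul]
  refine integral_mono_ae (hFi.const_mul c) hφF ?_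
  filter_upwards [hφ] with x hx using mul_le_mul_of_nonneg_right hx (hF x)

lemma integral_mul_le_const_mul_integral (hφ : ∀ᵐ x ∂μ, φ x ≤ c) (hF : ∀ x, 0 ≤ F x)
    (hFi : Integrable F μ) (hφF : Integrable (fun x => φ x * F x) μ) :
    ∫ x, φ x * F x ∂μ ≤ c * ∫ x, F x ∂μ := by
  rw [← integral_const_mul]
  refine integral_mono_ae hφF (hFi.const_mul c) ?_
  filter_upwards [hφ] with x hx using mul_le_mul_of_nonneg_right hx (hF x)

lemma ae_le_toReal_eLpNorm_top (hφ : AEStronglyMeasurable φ μ) (hφ_top : eLpNorm φ ⊤ μ < ⊤) :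
    ∀ᵐ x ∂μ, φ x ≤ (eLpNorm φ ⊤ μ).toReal := by
  filter_upwards [ae_le_lpNorm_exponent_top ⟨hφ, hφ_top⟩] with x hx
  rw [toReal_eLpNorm hφ]
  exact (le_abs_self _).trans hx

end WeightedIntegral

lemma openCube_eq_preimage (d : ℕ) :
    openCube d = WithLp.ofLp ⁻¹' univ.pi fun _ => Ioo (0 : ℝ) 1 := by
  ext x; simp [openCube]

lemma closedCube_eq_image (d : ℕ) :
    closedCube d = WithLp.toLp 2 '' Icc (0 : Fin d → ℝ) 1 := by
  ext x
  refine ⟨fun hx => ⟨x.ofLp, ⟨fun i => (hx i).1, fun i => (hx i).2⟩, rfl⟩, ?_⟩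
  rintro ⟨y, hy, rfl⟩ i
  exact ⟨hy.1 i, hy.2 i⟩

lemma isOpen_openCube (d : ℕ) : IsOpen (openCube d) := by
  rw [openCube_eq_preimage]
  exact (isOpen_set_pi finite_univ fun _ _ => isOpen_Ioo).preimage (PiLp.continuous_ofLp 2 _)

lemma isCompact_closedCube (d : ℕ) : IsCompact (closedCube d) := by
  rw [closedCube_eq_image]
  exact isCompact_Icc.image (PiLp.continuous_toLp 2 _)

lemma openCube_subset_closedCube (d : ℕ) : openCube d ⊆ closedCube d :=
  fun _ hx i => Ioo_subset_Icc_self (hx i)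

lemma closure_openCube_subset (d : ℕ) : closure (openCube d) ⊆ closedCube d :=
  closure_minimal (openCube_subset_closedCube d) (isCompact_closedCube d).isClosed

lemma frontier_openCube_subset (d : ℕ) :
    frontier (openCube d) ⊆ {x | x ∈ closedCube d ∧ ∃ i, x i = 0 ∨ x i = 1} := by
  intro x hx
  have hcl := closure_openCube_subset d hx.1
  have hint := hx.2
  rw [(isOpen_openCube d).interior_eq] at hint
  simp only [openCube, mem_ofPred_eq, not_forall] at hint
  obtain ⟨i, hi⟩ := hint
  exact ⟨hcl, i, by grind [hcl i]⟩

def cubeFace (n : ℕ) (i : Fin (n + 1)) (c : ℝ) : Set (EuclideanSpace ℝ (Fin (n + 1))) :=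
  (fun x => WithLp.toLp 2 (i.insertNth c x)) '' Icc 0 1

lemma isometry_insertNth {n : ℕ} (i : Fin (n + 1)) (c : ℝ) :
    Isometry (Fin.insertNth (α := fun _ => ℝ) i c) :=
  Isometry.of_dist_eq fun x y => by simp [Fin.dist_insertNth_insertNth]

lemma hausdorffMeasure_cubeFace_lt_top (n : ℕ) (i : Fin (n + 1)) (c : ℝ) :
    μH[n] (cubeFace n i c) < ⊤ := by
  have hLip := (PiLp.lipschitzWith_toLp 2 fun _ : Fin (n + 1) => ℝ).comp
    (isometry_insertNth i c).lipschitz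
  refine (hLip.hausdorffMeasure_image_le n.cast_nonneg _).trans_lt
    (ENNReal.mul_lt_top (by simp) ?_)
  have hvol : (μH[n] : Measure (Fin n → ℝ)) = volume := by
    simpa using hausdorffMeasure_pi_real (ι := Fin n)
  rw [hvol]
  exact isCompact_Icc.measure_lt_top

lemma frontier_openCube_subset_iUnion_cubeFace (n : ℕ) :
    frontier (openCube (n + 1)) ⊆ ⋃ i, cubeFace n i 0 ∪ cubeFace n i 1 := by
  intro x hx
  obtain ⟨hcl, i, hi⟩ := frontier_openCube_subset _ hx
  have hface : x ∈ cubeFace n i (x i) :=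
    ⟨i.removeNth x, ⟨fun k => (hcl _).1, fun k => (hcl _).2⟩, by simp⟩
  refine mem_iUnion.2 ⟨i, ?_⟩
  rcases hi with h | h <;> rw [h] at hface <;> simp [hface]

lemma hausdorffMeasure_frontier_openCube_lt_top {d : ℕ} (hd : 1 ≤ d) :
    μH[(d : ℝ) - 1] (frontier (openCube d)) < ⊤ := by
  obtain ⟨n, rfl⟩ := Nat.exists_eq_add_of_le' hd
  rw [Nat.cast_succ, add_sub_cancel_right]
  refine (measure_mono (frontier_openCube_subset_iUnion_cubeFace n)).trans_lt ?_
  refine (measure_iUnion_fintype_le _ _).trans_lt (ENNReal.sum_lt_top.2 fun i _ => ?_)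
  exact measure_union_lt_top (hausdorffMeasure_cubeFace_lt_top n i 0)
    (hausdorffMeasure_cubeFace_lt_top n i 1)

namespace IsNice

variable {d : ℕ} {u v : EuclideanSpace ℝ (Fin d) → ℝ}

lemma continuousOn (hu : IsNice d u) : ContinuousOn u (closedCube d) := by
  obtain ⟨U, -, hcU, hu, -⟩ := hu
  exact hu.continuousOn.mono hcU

lemma continuousOn_gradient (hu : IsNice d u) : ContinuousOn (gradient u) (closedCube d) := by
  obtain ⟨U, hU, hcU, hu, -⟩ := hu
  exact (hu.continuousOn_gradient hU).mono hcU

lemma sub (hu : IsNice d u) (hv : IsNice d v) : IsNice d (u - v) := by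
  obtain ⟨U, hU, hcU, hu, ⟨Cu, hCu⟩, ⟨Cu', hCu'⟩⟩ := hu
  obtain ⟨V, hV, hcV, hv, ⟨Cv, hCv⟩, ⟨Cv', hCv'⟩⟩ := hv
  refine ⟨U ∩ V, hU.inter hV, subset_inter hcU hcV,
    (hu.mono inter_subset_left).sub (hv.mono inter_subset_right),
    ⟨Cu + Cv, fun x hx => (abs_sub _ _).trans (add_le_add (hCu x hx.1) (hCv x hx.2))⟩,
    ⟨Cu' + Cv', fun x hx => ?_⟩⟩
  rw [gradient_sub ((hu.contDiffAt (hU.mem_nhds hx.1)).differentiableAt one_ne_zero)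
    ((hv.contDiffAt (hV.mem_nhds hx.2)).differentiableAt one_ne_zero)]
  exact (norm_sub_le _ _).trans (add_le_add (hCu' x hx.1) (hCv' x hx.2))

lemma differentiableAt (hu : IsNice d u) {x : EuclideanSpace ℝ (Fin d)} (hx : x ∈ closedCube d) :
    DifferentiableAt ℝ u x := by
  obtain ⟨U, hU, hcU, hu, -⟩ := hu
  exact (hu.contDiffAt (hU.mem_nhds (hcU hx))).differentiableAt one_ne_zero

end IsNice

section Integrability

variable {d : ℕ} {φ F : EuclideanSpace ℝ (Fin d) → ℝ}

lemma integrableOn_openCube (hF : ContinuousOn F (closedCube d)) :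
    IntegrableOn F (openCube d) :=
  (hF.integrableOn_compact (isCompact_closedCube d)).mono_set (openCube_subset_closedCube d)

lemma integrableOn_openCube_mul (hφ : Measurable φ) (hφb : ∃ C, ∀ x ∈ openCube d, |φ x| ≤ C)
    (hF : ContinuousOn F (closedCube d)) : IntegrableOn (fun x => φ x * F x) (openCube d) :=
  IntegrableOn.mul_of_bounded (integrableOn_openCube hF) (isOpen_openCube d).measurableSet
    hφ.aestronglyMeasurable hφb

lemma integrableOn_frontier_openCube_mul (hd : 1 ≤ d) (hφ : Measurable φ)
    (hφb : ∃ C, ∀ y ∈ frontier (openCube d), |φ y| ≤ C) (hF : ContinuousOn F (closedCube d)) :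
    IntegrableOn (fun y => φ y * F y) (frontier (openCube d)) μH[(d : ℝ) - 1] := by
  have hsub : frontier (openCube d) ⊆ closedCube d := fun _ hx => (frontier_openCube_subset d hx).1
  exact IntegrableOn.mul_of_bounded ((hF.mono hsub).integrableOn_of_measure_lt_top
    ((isCompact_closedCube d).of_isClosed_subset isClosed_frontier hsub)
    (hausdorffMeasure_frontier_openCube_lt_top hd))
    isClosed_frontier.measurableSet hφ.aestronglyMeasurable hφb

end Integrability

lemma ritzEnergy_sub_ritzEnergy {d : ℕ} (hd : 1 ≤ d) {w f g u v : EuclideanSpace ℝ (Fin d) → ℝ}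
    (hw : Measurable w) (hwb : ∃ C, ∀ x ∈ openCube d, |w x| ≤ C)
    (hf : Measurable f) (hfb : ∃ C, ∀ x ∈ openCube d, |f x| ≤ C)
    (hg : Measurable g) (hgb : ∃ C, ∀ y ∈ frontier (openCube d), |g y| ≤ C)
    (hu : IsNice d u) (hv : IsNice d v) :
    ritzEnergy d w f g u - ritzEnergy d w f g v =
      (1/2) * (∫ x in openCube d, ‖gradient (u - v) x‖^2) +
        (1/2) * (∫ x in openCube d, w x * (u - v) x ^ 2) +
        ((∫ x in openCube d, (inner ℝ (gradient v x) (gradient (u - v) x) : ℝ)) +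
          (∫ x in openCube d, w x * v x * (u - v) x) -
          ((∫ x in openCube d, f x * (u - v) x) +
            ∫ y in frontier (openCube d), g y * (u - v) y ∂(μH[(d:ℝ) - 1]))) := by
  set e := u - v
  have he : IsNice d e := hu.sub hv
  have hΩ : MeasurableSet (openCube d) := (isOpen_openCube d).measurableSet
  have hgrad : ∫ x in openCube d, ‖gradient u x‖^2 =
      (∫ x in openCube d, ‖gradient v x‖^2) +
        2 * (∫ x in openCube d, (inner ℝ (gradient v x) (gradient e x) : ℝ)) +
        ∫ x in openCube d, ‖gradient e x‖^2 := by
    rw [← integral_add_two_mul_add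
      (integrableOn_openCube (F := fun x => ‖gradient v x‖ ^ 2)
        (hv.continuousOn_gradient.norm.pow 2))
      (integrableOn_openCube (hv.continuousOn_gradient.inner he.continuousOn_gradient))
      (integrableOn_openCube (F := fun x => ‖gradient e x‖ ^ 2)
        (he.continuousOn_gradient.norm.pow 2))]
    refine setIntegral_congr_fun hΩ fun x hx => ?_
    have hx' := openCube_subset_closedCube d hx
    rw [← norm_add_sq_real, gradient_sub (hu.differentiableAt hx') (hv.differentiableAt hx'),
      add_sub_cancel]
  have hpot : ∫ x in openCube d, w x * u x ^ 2 =
      (∫ x in openCube d, w x * v x ^ 2) + 2 * (∫ x in openCube d, w x * v x * e x) +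
        ∫ x in openCube d, w x * e x ^ 2 := by
    rw [← integral_add_two_mul_add
      (integrableOn_openCube_mul (F := fun x => v x ^ 2) hw hwb (hv.continuousOn.pow 2))
      (by
        simp_rw [mul_assoc]
        exact integrableOn_openCube_mul hw hwb (hv.continuousOn.mul he.continuousOn))
      (integrableOn_openCube_mul (F := fun x => e x ^ 2) hw hwb (he.continuousOn.pow 2))]
    congr 1 with x
    simp only [e, Pi.sub_apply]
    ring
  have hsrc : ∫ x in openCube d, f x * u x =
      (∫ x in openCube d, f x * v x) + ∫ x in openCube d, f x * e x := by
    rw [← integral_add (integrableOn_openCube_mul hf hfb hv.continuousOn)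
      (integrableOn_openCube_mul hf hfb he.continuousOn)]
    congr 1 with x
    simp only [e, Pi.sub_apply]
    ring
  have hbdry : ∫ y in frontier (openCube d), g y * u y ∂(μH[(d:ℝ) - 1]) =
      (∫ y in frontier (openCube d), g y * v y ∂(μH[(d:ℝ) - 1])) +
        ∫ y in frontier (openCube d), g y * e y ∂(μH[(d:ℝ) - 1]) := by
    rw [← integral_add (integrableOn_frontier_openCube_mul hd hg hgb hv.continuousOn)
      (integrableOn_frontier_openCube_mul hd hg hgb he.continuousOn)]
    congr 1 with y
    simp only [e, Pi.sub_apply]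
    ring
  simp only [ritzEnergy]
  rw [hgrad, hpot, hsrc, hbdry]
  ring

theorem ritzEnergy_excess_bounds_general (d : ℕ) (hd : 1 < d)
    (w f g : EuclideanSpace ℝ (Fin d) → ℝ) (c₁ : ℝ)
    (hw : Measurable w) (hwb : ∃ C, ∀ x ∈ openCube d, |w x| ≤ C)
    (hwlb : ∀ᵐ x ∂(volume.restrict (openCube d)), c₁ ≤ w x)
    (hwtop : eLpNorm w ⊤ (volume.restrict (openCube d)) < ⊤)
    (hf : Measurable f) (hfb : ∃ C, ∀ x ∈ openCube d, |f x| ≤ C)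
    (hg : Measurable g) (hgb : ∃ C, ∀ y ∈ frontier (openCube d), |g y| ≤ C)
    (ustar : EuclideanSpace ℝ (Fin d) → ℝ)
    (hnice : IsNice d ustar) (hweak : IsWeakSol d w f g ustar) :
    ∀ u : EuclideanSpace ℝ (Fin d) → ℝ, IsNice d u →
      min c₁ 1 / 2 * H1normSq d (u - ustar) ≤
          ritzEnergy d w f g u - ritzEnergy d w f g ustar ∧
        ritzEnergy d w f g u - ritzEnergy d w f g ustar ≤
          max ((eLpNorm w ⊤ (volume.restrict (openCube d))).toReal) 1 / 2 *
            H1normSq d (u - ustar) := by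
  intro u hu
  have he := hu.sub hnice
  set e := u - ustar
  set M := (eLpNorm w ⊤ (volume.restrict (openCube d))).toReal
  have hexcess : ritzEnergy d w f g u - ritzEnergy d w f g ustar =
      (1/2) * (∫ x in openCube d, ‖gradient e x‖^2) + (1/2) * ∫ x in openCube d, w x * e x ^ 2 := by
    rw [ritzEnergy_sub_ritzEnergy hd.le hw hwb hf hfb hg hgb hu hnice, hweak e he, sub_self,
      add_zero]
  have he2 : IntegrableOn (fun x => e x ^ 2) (openCube d) :=
    integrableOn_openCube (he.continuousOn.pow 2)
  have hwe2 : IntegrableOn (fun x => w x * e x ^ 2) (openCube d) :=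
    integrableOn_openCube_mul (F := fun x => e x ^ 2) hw hwb (he.continuousOn.pow 2)
  have hlow := const_mul_integral_le_integral_mul hwlb (fun x => sq_nonneg (e x)) he2 hwe2
  have hupp := integral_mul_le_const_mul_integral
    (ae_le_toReal_eLpNorm_top hw.aestronglyMeasurable hwtop) (fun x => sq_nonneg (e x)) he2 hwe2
  have hL2 : 0 ≤ ∫ x in openCube d, e x ^ 2 := integral_nonneg fun x => sq_nonneg (e x)
  have hgrad : 0 ≤ ∫ x in openCube d, ‖gradient e x‖^2 := integral_nonneg fun x => by positivity
  rw [hexcess, H1normSq]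
  constructor
  · nlinarith [mul_le_mul_of_nonneg_right (min_le_left c₁ 1) hL2,
      mul_le_mul_of_nonneg_right (min_le_right c₁ 1) hgrad]
  · nlinarith [mul_le_mul_of_nonneg_right (le_max_left M 1) hL2,
      mul_le_mul_of_nonneg_right (le_max_right M 1) hgrad]

/-- **Coercivity and boundedness of the Ritz energy excess (equation (3.3)).**
For every admissible `u`,
`(min(c₁,1)/2)·‖u−u*‖²_{H¹} ≤ L(u) − L(u*) ≤ (max(‖w‖_{L^∞(Ω)},1)/2)·‖u−u*‖²_{H¹}`. -/
theorem ritzEnergy_excess_bounds (d : ℕ) (hd : 1 < d)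
    (w f g : EuclideanSpace ℝ (Fin d) → ℝ) (c₁ : ℝ) (hc₁ : 0 < c₁)
    (hw : Measurable w) (hwb : ∃ C, ∀ x ∈ openCube d, |w x| ≤ C)
    (hwlb : ∀ᵐ x ∂(volume.restrict (openCube d)), c₁ ≤ w x)
    (hwtop : eLpNorm w ⊤ (volume.restrict (openCube d)) < ⊤)
    (hf : Measurable f) (hfb : ∃ C, ∀ x ∈ openCube d, |f x| ≤ C)
    (hg : Measurable g) (hgb : ∃ C, ∀ y ∈ frontier (openCube d), |g y| ≤ C)
    (ustar : EuclideanSpace ℝ (Fin d) → ℝ)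
    (hnice : IsNice d ustar) (hweak : IsWeakSol d w f g ustar) :
    ∀ u : EuclideanSpace ℝ (Fin d) → ℝ, IsNice d u →
      min c₁ 1 / 2 * H1normSq d (u - ustar) ≤
          ritzEnergy d w f g u - ritzEnergy d w f g ustar ∧
        ritzEnergy d w f g u - ritzEnergy d w f g ustar ≤
          max ((eLpNorm w ⊤ (volume.restrict (openCube d))).toReal) 1 / 2 *
            H1normSq d (u - ustar) :=
  ritzEnergy_excess_bounds_general d hd w f g c₁ hw hwb hwlb hwtop hf hfb hg hgb ustar hnice hweak
end
end

section
/- Let X be a set, let x₁,…,x_n ∈ X, let F be a nonempty countable class of functions X → ℝ with sup_{f∈F} max_{1≤i≤n} |f(xᵢ)| < ∞, and let Ψ : X × ℝ → ℝ satisfy: for every x, the map y ↦ Ψ(x,y) is L-Lipschitz and Ψ(x,0) = 0. Let σ₁,…,σ_n be i.i.d. Rademacher variables (uniform on {−1,1}). Then E_σ[ sup_{f∈F} (1/n)|Σ_{i=1}^n σᵢ Ψ(xᵢ, f(xᵢ))| ] ≤ 2L · E_σ[ sup_{f∈F} (1/n)|Σ_{i=1}^n σᵢ f(xᵢ)| ].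 -/
/-!
Since `|t| = max t (-t)` and the signs are symmetric under `σ ↦ -σ`, the expected supremum of
`|Σ σᵢ Ψ(xᵢ, f(xᵢ))|` is at most twice the expected supremum of `Σ σᵢ Ψ(xᵢ, f(xᵢ))` over
`F ∪ {0}`; adjoining `0` is harmless because `Ψ(x, 0) = 0`. Without absolute values, the
coordinates `Ψ(xₖ, f(xₖ))` are replaced one at a time by `L f(xₖ)`: conditionally on the other
signs, averaging over `σₖ = ±1` gives
`sup (T + c) + sup (T - c) = sup_{f,g} (T f + T g + c f - c g)`, which can only grow when `c`
is replaced by a function with larger increments.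
-/

open Finset

section SupLemmas

variable {α : Type*}

lemma sSup_add_sSup_le_of_forall_add_le {S T : Set ℝ} (hS : S.Nonempty) (hT : T.Nonempty) {M : ℝ}
    (h : ∀ x ∈ S, ∀ y ∈ T, x + y ≤ M) : sSup S + sSup T ≤ M := by
  have hST : ∀ x ∈ S, sSup T ≤ M - x := fun x hx =>
    csSup_le hT fun y hy => le_sub_iff_add_le'.mpr (h x hx y hy)
  have : sSup S ≤ M - sSup T := csSup_le hS fun x hx => le_sub_comm.mp (hST x hx)
  linarith

lemma sSup_image_const_mul {c : ℝ} (hc : 0 ≤ c) (g : α → ℝ) (A : Set α) :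
    sSup ((fun a => c * g a) '' A) = c * sSup (g '' A) := by
  have h := Real.sSup_smul_of_nonneg hc (g '' A)
  rwa [← Set.image_smul, Set.image_image] at h

lemma sSup_add_sSup_le_of_abs_sub_le {A : Set α} (hA : A.Nonempty) {T c d : α → ℝ}
    (hcd : ∀ a ∈ A, ∀ b ∈ A, |c a - c b| ≤ |d a - d b|)
    (hplus : BddAbove ((fun a => T a + d a) '' A)) (hminus : BddAbove ((fun a => T a - d a) '' A)) :
    sSup ((fun a => T a + c a) '' A) + sSup ((fun a => T a - c a) '' A)
      ≤ sSup ((fun a => T a + d a) '' A) + sSup ((fun a => T a - d a) '' A) := by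
  refine sSup_add_sSup_le_of_forall_add_le (hA.image _) (hA.image _) ?_
  rintro _ ⟨a, ha, rfl⟩ _ ⟨b, hb, rfl⟩
  have hplus_le : ∀ a ∈ A, T a + d a ≤ sSup ((fun a => T a + d a) '' A) :=
    fun a ha => le_csSup hplus ⟨a, ha, rfl⟩
  have hminus_le : ∀ a ∈ A, T a - d a ≤ sSup ((fun a => T a - d a) '' A) :=
    fun a ha => le_csSup hminus ⟨a, ha, rfl⟩
  rcases le_abs.mp ((le_abs_self (c a - c b)).trans (hcd a ha b hb)) with h | h
  · linarith [hplus_le a ha, hminus_le b hb]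
  · linarith [hplus_le b hb, hminus_le a ha]

end SupLemmas

def boolSign (b : Bool) : ℝ := if b then 1 else -1

lemma boolSign_not (b : Bool) : boolSign (!b) = -boolSign b := by
  cases b <;> simp [boolSign]

lemma abs_boolSign (b : Bool) : |boolSign b| = 1 := by
  cases b <;> simp [boolSign]

lemma sum_le_sum_of_add_involutive_le {ι : Type*} [Fintype ι] {e : ι → ι}
    (he : Function.Involutive e) {g h : ι → ℝ} (hgh : ∀ s, g s + g (e s) ≤ h s + h (e s)) :
    ∑ s, g s ≤ ∑ s, h s := by
  have hsum := sum_le_sum fun s (_ : s ∈ univ) => hgh s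
  rw [sum_add_distrib, sum_add_distrib, he.bijective.sum_comp g, he.bijective.sum_comp h]
    at hsum
  linarith

section SignedSum

variable {n : ℕ}

def signedSum (s : Fin n → Bool) (y : Fin n → ℝ) : ℝ := ∑ i, boolSign (s i) * y i

lemma signedSum_not (s : Fin n → Bool) (y : Fin n → ℝ) :
    signedSum (fun i => !s i) y = -signedSum s y := by
  simp only [signedSum, boolSign_not, neg_mul, sum_neg_distrib]

lemma signedSum_eq_add_sum_erase (s : Fin n → Bool) (y : Fin n → ℝ) (k : Fin n) :
    signedSum s y = ∑ i ∈ univ.erase k, boolSign (s i) * y i + boolSign (s k) * y k := by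
  rw [signedSum, ← add_sum_erase _ _ (mem_univ k), add_comm]

lemma signedSum_update_not_eq_sub (s : Fin n → Bool) (y : Fin n → ℝ) (k : Fin n) :
    signedSum (Function.update s k (!s k)) y
      = ∑ i ∈ univ.erase k, boolSign (s i) * y i - boolSign (s k) * y k := by
  rw [signedSum_eq_add_sum_erase _ _ k, Function.update_self, boolSign_not, neg_mul,
    ← sub_eq_add_neg]
  congr 1
  exact sum_congr rfl fun i hi => by rw [Function.update_of_ne (ne_of_mem_erase hi)]

lemma signedSum_const_mul (s : Fin n → Bool) (c : ℝ) (y : Fin n → ℝ) :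
    signedSum s (fun i => c * y i) = c * signedSum s y := by
  simp only [signedSum, mul_sum, mul_left_comm]

lemma abs_signedSum_le (s : Fin n → Bool) {y : Fin n → ℝ} {C : ℝ} (hy : ∀ i, |y i| ≤ C) :
    |signedSum s y| ≤ n * C :=
  calc |signedSum s y| ≤ ∑ i, |boolSign (s i) * y i| := abs_sum_le_sum_abs _ _
    _ ≤ ∑ _i : Fin n, C := sum_le_sum fun i _ => by rw [abs_mul, abs_boolSign, one_mul]; exact hy i
    _ = n * C := by simp

variable {α : Type*} {A : Set α} {u v : α → Fin n → ℝ} {C : ℝ}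

lemma bddAbove_image_abs_signedSum (hu : ∀ a ∈ A, ∀ i, |u a i| ≤ C) (s : Fin n → Bool) :
    BddAbove ((fun a => |signedSum s (u a)|) '' A) :=
  ⟨n * C, by rintro _ ⟨a, ha, rfl⟩; exact abs_signedSum_le s (hu a ha)⟩

lemma bddAbove_image_signedSum (hu : ∀ a ∈ A, ∀ i, |u a i| ≤ C) (s : Fin n → Bool) :
    BddAbove ((fun a => signedSum s (u a)) '' A) :=
  ⟨n * C, by rintro _ ⟨a, ha, rfl⟩; exact (le_abs_self _).trans (abs_signedSum_le s (hu a ha))⟩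

lemma sum_sSup_signedSum_le_of_single_coord (hA : A.Nonempty) (k : Fin n)
    (hoff : ∀ a ∈ A, ∀ i ≠ k, u a i = v a i)
    (hk : ∀ a ∈ A, ∀ b ∈ A, |u a k - u b k| ≤ |v a k - v b k|)
    (hv : ∀ a ∈ A, ∀ i, |v a i| ≤ C) :
    ∑ s, sSup ((fun a => signedSum s (u a)) '' A)
      ≤ ∑ s, sSup ((fun a => signedSum s (v a)) '' A) := by
  have hflip : Function.Involutive fun s : Fin n → Bool => Function.update s k (!s k) := by
    intro s
    simp only [Function.update_self, Bool.not_not, Function.update_idem, Function.update_eq_self]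
  refine sum_le_sum_of_add_involutive_le hflip fun s => ?_
  set T : α → ℝ := fun a => ∑ i ∈ univ.erase k, boolSign (s i) * u a i
  have hT : ∀ a ∈ A, ∑ i ∈ univ.erase k, boolSign (s i) * v a i = T a := fun a ha =>
    sum_congr rfl fun i hi => by rw [hoff a ha i (ne_of_mem_erase hi)]
  have himage : ∀ (w : α → Fin n → ℝ), (∀ a ∈ A, ∑ i ∈ univ.erase k, boolSign (s i) * w a i = T a) →
      (fun a => signedSum s (w a)) '' A = (fun a => T a + boolSign (s k) * w a k) '' A ∧
      (fun a => signedSum (Function.update s k (!s k)) (w a)) '' A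
        = (fun a => T a - boolSign (s k) * w a k) '' A := by
    intro w hw
    refine ⟨Set.image_congr fun a ha => ?_, Set.image_congr fun a ha => ?_⟩
    · rw [signedSum_eq_add_sum_erase _ _ k, hw a ha]
    · rw [signedSum_update_not_eq_sub, hw a ha]
  rw [(himage u fun a _ => rfl).1, (himage u fun a _ => rfl).2, (himage v hT).1, (himage v hT).2]
  refine sSup_add_sSup_le_of_abs_sub_le hA (fun a ha b hb => ?_) ?_ ?_
  · simpa only [← mul_sub, abs_mul, abs_boolSign, one_mul] using hk a ha b hb
  · rw [← (himage v hT).1]; exact bddAbove_image_signedSum hv s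
  · rw [← (himage v hT).2]; exact bddAbove_image_signedSum hv _

theorem sum_sSup_signedSum_le_of_abs_sub_le (hA : A.Nonempty)
    (huv : ∀ a ∈ A, ∀ b ∈ A, ∀ i, |u a i - u b i| ≤ |v a i - v b i|)
    (hu : ∀ a ∈ A, ∀ i, |u a i| ≤ C) (hv : ∀ a ∈ A, ∀ i, |v a i| ≤ C) :
    ∑ s, sSup ((fun a => signedSum s (u a)) '' A)
      ≤ ∑ s, sSup ((fun a => signedSum s (v a)) '' A) := by
  classical
  let w : Finset (Fin n) → α → Fin n → ℝ := fun J a i => if i ∈ J then v a i else u a i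
  suffices ∀ J, ∑ s, sSup ((fun a => signedSum s (u a)) '' A)
      ≤ ∑ s, sSup ((fun a => signedSum s (w J a)) '' A) by
    simpa only [w, mem_univ, if_true] using this univ
  intro J
  induction J using Finset.induction_on with
  | empty => simp only [w, notMem_empty, if_false, le_refl]
  | insert k J hk ih =>
    refine ih.trans (sum_sSup_signedSum_le_of_single_coord hA k (C := C) ?_ ?_ ?_)
    · intro a _ i hi
      simp only [w, mem_insert, hi, false_or]
    · simpa only [w, hk, mem_insert, true_or, if_true, if_false] using fun a ha b hb =>
        huv a ha b hb k
    · intro a ha i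
      simp only [w]
      split_ifs
      exacts [hv a ha i, hu a ha i]

theorem sum_sSup_abs_signedSum_le {z : α} (huz : u z = 0) (hvz : v z = 0)
    (huv : ∀ a ∈ insert z A, ∀ b ∈ insert z A, ∀ i, |u a i - u b i| ≤ |v a i - v b i|)
    (hu : ∀ a ∈ insert z A, ∀ i, |u a i| ≤ C) (hv : ∀ a ∈ insert z A, ∀ i, |v a i| ≤ C) :
    ∑ s, sSup ((fun a => |signedSum s (u a)|) '' A)
      ≤ 2 * ∑ s, sSup ((fun a => |signedSum s (v a)|) '' A) := by
  set P : (α → Fin n → ℝ) → (Fin n → Bool) → ℝ :=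
    fun w s => sSup ((fun a => signedSum s (w a)) '' insert z A)
  have hPu_nonneg : ∀ s, 0 ≤ P u s := fun s =>
    le_of_eq_of_le (by simp [huz, signedSum])
      (le_csSup (bddAbove_image_signedSum hu s) ⟨z, Set.mem_insert z A, rfl⟩)
  have habs : ∀ s, sSup ((fun a => |signedSum s (u a)|) '' A) ≤ P u s + P u (fun i => !s i) := by
    intro s
    refine Real.sSup_le ?_ (add_nonneg (hPu_nonneg s) (hPu_nonneg _))
    rintro _ ⟨a, ha, rfl⟩
    have h₁ : signedSum s (u a) ≤ P u s :=
      le_csSup (bddAbove_image_signedSum hu s) ⟨a, Set.mem_insert_of_mem z ha, rfl⟩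
    have h₂ : -signedSum s (u a) ≤ P u (fun i => !s i) := by
      rw [← signedSum_not]
      exact le_csSup (bddAbove_image_signedSum hu _) ⟨a, Set.mem_insert_of_mem z ha, rfl⟩
    have h₁' := hPu_nonneg s
    have h₂' := hPu_nonneg (fun i => !s i)
    exact abs_le.mpr ⟨by linarith, by linarith⟩
  have hP_le : ∀ s, P v s ≤ sSup ((fun a => |signedSum s (v a)|) '' A) := by
    intro s
    have hsSup_nonneg := Real.sSup_nonneg (s := (fun a => |signedSum s (v a)|) '' A)
      (by rintro _ ⟨a, _, rfl⟩; exact abs_nonneg _)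
    refine Real.sSup_le ?_ hsSup_nonneg
    rintro _ ⟨a, ha | ha, rfl⟩
    · simpa [ha, hvz, signedSum] using hsSup_nonneg
    · exact (le_abs_self _).trans (le_csSup
        (bddAbove_image_abs_signedSum (fun a ha => hv a (Set.mem_insert_of_mem z ha)) s)
        ⟨a, ha, rfl⟩)
  have hflip : Function.Involutive fun s : Fin n → Bool => fun i => !s i := fun s => by
    simp only [Bool.not_not]
  calc ∑ s, sSup ((fun a => |signedSum s (u a)|) '' A)
      ≤ ∑ s, (P u s + P u (fun i => !s i)) := sum_le_sum fun s _ => habs s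
    _ = 2 * ∑ s, P u s := by
      rw [sum_add_distrib, hflip.bijective.sum_comp (P u)]
      ring
    _ ≤ 2 * ∑ s, P v s := by
      gcongr 2 * ?_
      exact sum_sSup_signedSum_le_of_abs_sub_le (Set.insert_nonempty z A) huv hu hv
    _ ≤ 2 * ∑ s, sSup ((fun a => |signedSum s (v a)|) '' A) := by
      gcongr with s
      exact hP_le s

end SignedSum

theorem rademacher_contraction_general {X : Type*} (n : ℕ) (x : Fin n → X)
    (F : Set (X → ℝ))
    (C : ℝ) (hC : ∀ f ∈ F, ∀ i, |f (x i)| ≤ C)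
    (Ψ : X → ℝ → ℝ) (L : ℝ) (hL : 0 ≤ L)
    (hLip : ∀ z y₁ y₂, |Ψ z y₁ - Ψ z y₂| ≤ L * |y₁ - y₂|)
    (hzero : ∀ z, Ψ z 0 = 0) :
    (1 / 2 ^ n : ℝ) * ∑ s : Fin n → Bool,
        sSup ((fun f : X → ℝ => (1 / n : ℝ) *
          |∑ i, (if s i then (1:ℝ) else -1) * Ψ (x i) (f (x i))|) '' F)
      ≤ 2 * L * ((1 / 2 ^ n : ℝ) * ∑ s : Fin n → Bool,
        sSup ((fun f : X → ℝ => (1 / n : ℝ) *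
          |∑ i, (if s i then (1:ℝ) else -1) * f (x i)|) '' F)) := by
  have hC_insert : ∀ f ∈ insert 0 F, ∀ i, |f (x i)| ≤ |C| := by
    rintro f (rfl | hf) i
    exacts [by simp, (hC f hf i).trans (le_abs_self C)]
  have hΨ : ∀ z y, |Ψ z y| ≤ L * |y| := fun z y => by simpa [hzero] using hLip z y 0
  have key := sum_sSup_abs_signedSum_le (A := F) (z := 0) (C := L * |C|)
    (u := fun f i => Ψ (x i) (f (x i))) (v := fun f i => L * f (x i))
    (funext fun i => hzero (x i)) (funext fun i => mul_zero L)
    (fun f _ g _ i => (hLip _ _ _).trans_eq (by rw [← mul_sub, abs_mul, abs_of_nonneg hL]))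
    (fun f hf i => (hΨ _ _).trans (mul_le_mul_of_nonneg_left (hC_insert f hf i) hL))
    (fun f hf i => (abs_mul L _).trans_le <| by
      rw [abs_of_nonneg hL]; exact mul_le_mul_of_nonneg_left (hC_insert f hf i) hL)
  simp only [signedSum_const_mul, abs_mul, abs_of_nonneg hL, sSup_image_const_mul hL,
    ← mul_sum] at key
  simp only [sSup_image_const_mul (by positivity : (0 : ℝ) ≤ 1 / n), ← mul_sum]
  have hscaled := mul_le_mul_of_nonneg_left key (by positivity : (0 : ℝ) ≤ 1 / 2 ^ n * (1 / n))
  unfold signedSum boolSign at hscaled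
  linarith

/-- **Rademacher contraction principle (Ledoux–Talagrand, Corollary 3.17; Lemma 3.6).**
If `Ψ(x,·)` is `L`-Lipschitz with `Ψ(x,0) = 0`, then the empirical Rademacher
complexity of `{z ↦ Ψ(z, f(z)) : f ∈ F}` is at most `2L` times that of `F`.
The expectation over the i.i.d. Rademacher signs `σ` (uniform on `{−1,1}ⁿ`) is
written as the average over all sign patterns `s : Fin n → Bool`. -/
theorem rademacher_contraction {X : Type*} (n : ℕ) (hn : 0 < n) (x : Fin n → X)
    (F : Set (X → ℝ)) (hFc : F.Countable) (hFne : F.Nonempty)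
    (C : ℝ) (hC : ∀ f ∈ F, ∀ i, |f (x i)| ≤ C)
    (Ψ : X → ℝ → ℝ) (L : ℝ) (hL : 0 ≤ L)
    (hLip : ∀ z y₁ y₂, |Ψ z y₁ - Ψ z y₂| ≤ L * |y₁ - y₂|)
    (hzero : ∀ z, Ψ z 0 = 0) :
    (1 / 2 ^ n : ℝ) * ∑ s : Fin n → Bool,
        sSup ((fun f : X → ℝ => (1 / n : ℝ) *
          |∑ i, (if s i then (1:ℝ) else -1) * Ψ (x i) (f (x i))|) '' F)
      ≤ 2 * L * ((1 / 2 ^ n : ℝ) * ∑ s : Fin n → Bool,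
        sSup ((fun f : X → ℝ => (1 / n : ℝ) *
          |∑ i, (if s i then (1:ℝ) else -1) * f (x i)|) '' F)) :=
  rademacher_contraction_general n x F C hC Ψ L hL hLip hzero
end

section
/- Let u : ℝ^d → ℝ be a function implemented by a ReLU² network of depth D and width W. Then u is C¹, and the function x ↦ ‖∇u(x)‖₂² = Σ_{i=1}^d (∂u/∂xᵢ(x))² can be implemented exactly by a ReLU–ReLU² network of depth D + 3 and width at most d·(D+2)·W. -/
noncomputable section

/-- The `ReLU` activation function `σ₁(t) = max(t,0)`. -/
noncomputable def relu1 (t : ℝ) : ℝ := max t 0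

/-- The `ReLU²` activation function `σ₂(t) = max(t,0)²`. -/
noncomputable def relu2 (t : ℝ) : ℝ := (max t 0) ^ 2

/-- `NNHidden acts m W D k g` : `g : ℝ^m → ℝ^k` is a stack of `D` hidden layers of
widths at most `W`, each layer consisting of an affine map followed by coordinatewise
activations chosen from the set `acts`. -/
inductive NNHidden (acts : Set (ℝ → ℝ)) (m W : ℕ) :
    ℕ → (k : ℕ) → (EuclideanSpace ℝ (Fin m) → (Fin k → ℝ)) → Prop
  | base : NNHidden acts m W 0 m (fun x j => x j)
  | layer {D k k' : ℕ} {g : EuclideanSpace ℝ (Fin m) → Fin k → ℝ}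
      (hg : NNHidden acts m W D k g)
      (A : Matrix (Fin k') (Fin k) ℝ) (b : Fin k' → ℝ) (ρ : Fin k' → ℝ → ℝ)
      (hρ : ∀ j, ρ j ∈ acts) (hk' : k' ≤ W) :
      NNHidden acts m W (D + 1) k' (fun x j => ρ j ((A.mulVec (g x) + b) j))

/-- `IsNetwork acts m D W u` : `u : ℝ^m → ℝ` is implemented by a neural network of
depth `D` (i.e. `D` affine maps and `D − 1` hidden activation layers) and width at
most `W`, whose hidden-unit activations all belong to `acts`. -/
def IsNetwork (acts : Set (ℝ → ℝ)) (m D W : ℕ) (u : EuclideanSpace ℝ (Fin m) → ℝ) : Prop :=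
  ∃ (k : ℕ) (g : EuclideanSpace ℝ (Fin m) → Fin k → ℝ)
    (A : Matrix (Fin 1) (Fin k) ℝ) (b : ℝ),
    NNHidden acts m W (D - 1) k g ∧ ∀ x, u x = A.mulVec (g x) 0 + b

/-!
The derivative of `relu2 ∘ z` is `2 (relu1 ∘ z) ∂z`, a product, and a product of two affine
readouts of a layer is an affine readout of four `ReLU²` units one layer up, because
`4pq = (p + q)² - (p - q)²` and `t² = relu2 t + relu2 (-t)`. So alongside the `ReLU²` network we
build a `ReLU`–`ReLU²` network whose `n`-th layer holds `relu2 ∘ z` and `relu1 ∘ z` for the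
pre-activations `z` of the `n`-th `ReLU²` layer, together with the product units for the
derivatives of the `(n-1)`-st; by the chain rule the derivatives of `z` are then affine readouts
of the `n`-th layer. After the last layer, one layer of products yields the partial derivatives
of `u`, one layer of squares yields `‖∇u‖²`, and a layer of `relu1` pads the depth.
-/

open Finset Filter Topology Asymptotics
open scoped Matrix

theorem relu2_add_relu2_neg (t : ℝ) : relu2 t + relu2 (-t) = t ^ 2 := by
  rcases le_total t 0 with h | h <;> simp [relu2, h]

theorem hasDerivAt_relu2 (t : ℝ) : HasDerivAt relu2 (2 * relu1 t) t := by
  rcases lt_trichotomy t 0 with ht | rfl | ht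
  · have : relu2 =ᶠ[𝓝 t] fun _ => 0 := by
      filter_upwards [Iio_mem_nhds ht] with s hs
      simp [relu2, (Set.mem_Iio.mp hs).le]
    simpa [relu1, ht.le] using (hasDerivAt_const t (0 : ℝ)).congr_of_eventuallyEq this
  · rw [hasDerivAt_iff_isLittleO_nhds_zero]
    refine (IsBigO.of_bound 1 (Eventually.of_forall fun h => ?_)).trans_isLittleO
      (isLittleO_pow_id one_lt_two)
    have : relu2 h ≤ h ^ 2 := relu2_add_relu2_neg h ▸ le_add_of_nonneg_right (sq_nonneg _)
    simpa [relu2, relu1, abs_of_nonneg (sq_nonneg (max h 0))] using this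
  · have : relu2 =ᶠ[𝓝 t] fun s => s ^ 2 := by
      filter_upwards [Ioi_mem_nhds ht] with s hs
      simp [relu2, (Set.mem_Ioi.mp hs).le]
    simpa [relu1, ht.le] using (hasDerivAt_pow 2 t).congr_of_eventuallyEq this

theorem contDiff_relu2 : ContDiff ℝ 1 relu2 := by
  rw [contDiff_one_iff_deriv, funext fun t => (hasDerivAt_relu2 t).deriv]
  exact ⟨fun t => (hasDerivAt_relu2 t).differentiableAt,
    continuous_const.mul (continuous_id.max continuous_const)⟩

section Readouts

variable {X ι : Type*}

/-- The functions `x ↦ w ⬝ᵥ H x + c` read off the features `H` by an affine map. -/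
def readouts (H : X → ι → ℝ) : Submodule ℝ (X → ℝ) :=
  Submodule.span ℝ (insert 1 (Set.range fun l x => H x l))

def neurons (acts : Set (ℝ → ℝ)) (H : X → ι → ℝ) : Set (X → ℝ) :=
  {f | ∃ ρ ∈ acts, ∃ t ∈ readouts H, f = ρ ∘ t}

variable {H : X → ι → ℝ}

theorem coord_mem_readouts (l : ι) : (fun x => H x l) ∈ readouts H :=
  Submodule.subset_span (Set.mem_insert_of_mem _ ⟨l, rfl⟩)

theorem one_mem_readouts : (1 : X → ℝ) ∈ readouts H :=
  Submodule.subset_span (Set.mem_insert 1 _)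

theorem span_insert_one_le_readouts {S : Set (X → ℝ)} (h : S ⊆ readouts H) :
    Submodule.span ℝ (insert 1 S) ≤ readouts H :=
  Submodule.span_le.2 (Set.insert_subset one_mem_readouts h)

theorem readouts_le_readouts {κ : Type*} {G : X → κ → ℝ}
    (h : ∀ l, (fun x => G x l) ∈ readouts H) : readouts G ≤ readouts H :=
  span_insert_one_le_readouts (Set.range_subset_iff.2 h)

theorem mulVec_apply_add_mem_readouts [Fintype ι] {κ : Type*} (A : Matrix κ ι ℝ) (j : κ)
    (c : ℝ) : (fun x => (A *ᵥ H x) j + c) ∈ readouts H := by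
  have : (fun x => (A *ᵥ H x) j + c) = ∑ l, A j l • (fun x => H x l) + c • 1 := by
    ext x; simp [Matrix.mulVec, dotProduct]
  rw [this]
  exact add_mem (sum_mem fun l _ => Submodule.smul_mem _ _ (coord_mem_readouts l))
    (Submodule.smul_mem _ _ one_mem_readouts)

theorem exists_eq_dotProduct_add_of_mem_readouts [Fintype ι] {f : X → ℝ}
    (hf : f ∈ readouts H) : ∃ (w : ι → ℝ) (c : ℝ), ∀ x, f x = w ⬝ᵥ H x + c := by
  obtain ⟨c, t, ht, rfl⟩ := Submodule.mem_span_insert.1 hf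
  obtain ⟨w, rfl⟩ := (Submodule.mem_span_range_iff_exists_fun ℝ).1 ht
  exact ⟨w, c, fun x => by simp [dotProduct, add_comm]⟩

theorem mem_neurons_of_nonneg {acts : Set (ℝ → ℝ)} (hacts : relu1 ∈ acts) {f : X → ℝ}
    (hf : f ∈ readouts H) (hf₀ : 0 ≤ f) : f ∈ neurons acts H :=
  ⟨relu1, hacts, f, hf, funext fun x => (max_eq_left (hf₀ x)).symm⟩

theorem const_mem_span_one (c : ℝ) : (fun _ : X => c) ∈ Submodule.span ℝ {1} :=
  Submodule.mem_span_singleton.2 ⟨c, by ext; simp⟩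

end Readouts

section Gadgets

variable {X ι : Type*} {H : X → ι → ℝ} {acts : Set (ℝ → ℝ)}

open Classical in
def squareUnits (t : X → ℝ) : Finset (X → ℝ) :=
  {relu2 ∘ t, relu2 ∘ (-t)}

open Classical in
def productUnits (p q : X → ℝ) : Finset (X → ℝ) :=
  squareUnits (p + q) ∪ squareUnits (p - q)

theorem card_squareUnits_le (t : X → ℝ) : #(squareUnits t) ≤ 2 := by
  classical exact card_le_two

theorem card_productUnits_le (p q : X → ℝ) : #(productUnits p q) ≤ 4 := by
  classical
  exact (card_union_le _ _).trans (add_le_add (card_squareUnits_le _) (card_squareUnits_le _))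

theorem squareUnits_nonneg {t f : X → ℝ} (hf : f ∈ squareUnits t) : 0 ≤ f := by
  classical
  simp only [squareUnits, mem_insert, mem_singleton] at hf
  rcases hf with rfl | rfl <;> exact fun x => sq_nonneg _

theorem squareUnits_subset_neurons (hacts : relu2 ∈ acts) {t : X → ℝ}
    (ht : t ∈ readouts H) : ↑(squareUnits t) ⊆ neurons acts H := by
  classical
  intro f hf
  simp only [squareUnits, coe_insert, coe_singleton, Set.mem_insert_iff,
    Set.mem_singleton_iff] at hf
  rcases hf with rfl | rfl
  exacts [⟨relu2, hacts, t, ht, rfl⟩, ⟨relu2, hacts, -t, neg_mem ht, rfl⟩]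

theorem productUnits_subset_neurons (hacts : relu2 ∈ acts) {p q : X → ℝ}
    (hp : p ∈ readouts H) (hq : q ∈ readouts H) : ↑(productUnits p q) ⊆ neurons acts H := by
  classical
  rw [productUnits, coe_union]
  exact Set.union_subset (squareUnits_subset_neurons hacts (add_mem hp hq))
    (squareUnits_subset_neurons hacts (sub_mem hp hq))

variable {V : Submodule ℝ (X → ℝ)}

theorem sq_mem_of_squareUnits_subset {t : X → ℝ}
    (h : ↑(squareUnits t) ⊆ (V : Set (X → ℝ))) : t ^ 2 ∈ V := by
  classical
  have : t ^ 2 = relu2 ∘ t + relu2 ∘ (-t) :=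
    funext fun x => (relu2_add_relu2_neg (t x)).symm
  rw [this]
  exact add_mem (h (by simp [squareUnits])) (h (by simp [squareUnits]))

theorem mul_mem_of_productUnits_subset {p q : X → ℝ}
    (h : ↑(productUnits p q) ⊆ (V : Set (X → ℝ))) : p * q ∈ V := by
  classical
  rw [productUnits, coe_union, Set.union_subset_iff] at h
  have : p * q = (4 : ℝ)⁻¹ • ((p + q) ^ 2 - (p - q) ^ 2) := by ext x; simp; ring
  rw [this]
  exact Submodule.smul_mem _ _
    (sub_mem (sq_mem_of_squareUnits_subset h.1) (sq_mem_of_squareUnits_subset h.2))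

end Gadgets

section Calculus

variable {E ι : Type*} [NormedAddCommGroup E] [NormedSpace ℝ E] {H : E → ι → ℝ}

def dirDeriv (v : E) (f : E → ℝ) : E → ℝ :=
  fun x => fderiv ℝ f x v

theorem contDiff_of_mem_readouts {r : WithTop ℕ∞} (hH : ∀ l, ContDiff ℝ r fun x => H x l)
    {f : E → ℝ} (hf : f ∈ readouts H) : ContDiff ℝ r f := by
  induction hf using Submodule.span_induction with
  | mem f hf =>
    rcases hf with rfl | ⟨l, rfl⟩
    exacts [contDiff_const, hH l]
  | zero => exact contDiff_const
  | add f g _ _ hf hg => exact hf.add hg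
  | smul a f _ hf => exact hf.const_smul a

theorem dirDeriv_mem_of_mem_readouts {V : Submodule ℝ (E → ℝ)} {v : E}
    (hH : ∀ l, Differentiable ℝ fun x => H x l) (hV : ∀ l, dirDeriv v (fun x => H x l) ∈ V)
    {f : E → ℝ} (hf : f ∈ readouts H) : dirDeriv v f ∈ V := by
  have hconst (c : ℝ) : dirDeriv v (fun _ => c) ∈ V := by
    convert zero_mem V
    funext x
    simp [dirDeriv]
  suffices Differentiable ℝ f ∧ dirDeriv v f ∈ V from this.2
  induction hf using Submodule.span_induction with
  | mem f hf =>
    rcases hf with rfl | ⟨l, rfl⟩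
    exacts [⟨differentiable_const 1, hconst 1⟩, ⟨hH l, hV l⟩]
  | zero => exact ⟨differentiable_const 0, hconst 0⟩
  | add f g _ _ hf hg =>
    have : dirDeriv v (f + g) = dirDeriv v f + dirDeriv v g := by
      funext x
      simp only [dirDeriv, fderiv_add (hf.1 x) (hg.1 x), add_apply, Pi.add_apply]
    exact ⟨hf.1.add hg.1, this ▸ add_mem hf.2 hg.2⟩
  | smul a f _ hf =>
    have : dirDeriv v (a • f) = a • dirDeriv v f := by
      funext x
      simp only [dirDeriv, fderiv_const_smul (hf.1 x), smul_apply, Pi.smul_apply]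
    exact ⟨hf.1.const_smul a, this ▸ Submodule.smul_mem _ a hf.2⟩

theorem dirDeriv_relu2_comp {z : E → ℝ} (hz : Differentiable ℝ z) (v : E) :
    dirDeriv v (relu2 ∘ z) = (2 : ℝ) • (relu1 ∘ z * dirDeriv v z) := by
  ext x
  simp [dirDeriv, ((hasDerivAt_relu2 (z x)).comp_hasFDerivAt x (hz x).hasFDerivAt).fderiv,
    mul_assoc]

theorem dirDeriv_coord {m : ℕ} (v : EuclideanSpace ℝ (Fin m)) (l : Fin m) :
    dirDeriv v (fun x : EuclideanSpace ℝ (Fin m) => x l) = fun _ => v l := by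
  funext x
  exact congrArg (fun L => L v) (EuclideanSpace.proj (𝕜 := ℝ) l).fderiv

theorem norm_gradient_sq_eq_sum {d : ℕ} (u : EuclideanSpace ℝ (Fin d) → ℝ)
    (x : EuclideanSpace ℝ (Fin d)) :
    ‖gradient u x‖ ^ 2 = ∑ i, dirDeriv (EuclideanSpace.single i 1) u x ^ 2 := by
  rw [EuclideanSpace.norm_sq_eq]
  refine sum_congr rfl fun i _ => ?_
  rw [Real.norm_eq_abs, sq_abs, dirDeriv, ← InnerProductSpace.toDual_symm_apply (𝕜 := ℝ),
    EuclideanSpace.inner_single_right]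
  simp [gradient]

end Calculus

section Network

variable {acts : Set (ℝ → ℝ)} {m W n K : ℕ} {H : EuclideanSpace ℝ (Fin m) → Fin K → ℝ}

theorem NNHidden.card_le (hH : NNHidden acts m W (n + 1) K H) : K ≤ W := by
  cases hH with
  | layer _ _ _ _ _ hK => exact hK

theorem NNHidden.contDiff_apply {r : WithTop ℕ∞} (hacts : ∀ ρ ∈ acts, ContDiff ℝ r ρ)
    (hH : NNHidden acts m W n K H) (j : Fin K) : ContDiff ℝ r fun x => H x j := by
  induction hH with
  | base => exact (EuclideanSpace.proj (𝕜 := ℝ) j).contDiff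
  | layer _ A b ρ hρ _ ih =>
    exact (hacts _ (hρ j)).comp
      (contDiff_of_mem_readouts ih (mulVec_apply_add_mem_readouts A j (b j)))

theorem NNHidden.exists_layer (hH : NNHidden acts m W n K H)
    (S : Finset (EuclideanSpace ℝ (Fin m) → ℝ)) (hS : ↑S ⊆ neurons acts H) (hW : #S ≤ W) :
    ∃ (K' : ℕ) (H' : EuclideanSpace ℝ (Fin m) → Fin K' → ℝ),
      NNHidden acts m W (n + 1) K' H' ∧
        ↑S ⊆ (readouts H' : Set (EuclideanSpace ℝ (Fin m) → ℝ)) := by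
  have hunit (j : Fin #S) : ∃ ρ ∈ acts, ∃ (w : Fin K → ℝ) (c : ℝ),
      ∀ x, (S.equivFin.symm j : EuclideanSpace ℝ (Fin m) → ℝ) x = ρ (w ⬝ᵥ H x + c) := by
    obtain ⟨ρ, hρ, t, ht, hf⟩ := hS (S.equivFin.symm j).2
    obtain ⟨w, c, ht⟩ := exists_eq_dotProduct_add_of_mem_readouts ht
    exact ⟨ρ, hρ, w, c, fun x => by rw [hf, Function.comp_apply, ht]⟩
  choose ρ hρ w c hw using hunit
  refine ⟨#S, _, hH.layer (Matrix.of w) c ρ hρ hW, fun f hf => ?_⟩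
  set j := S.equivFin ⟨f, hf⟩
  have hf' : f = fun x => ρ j ((Matrix.of w *ᵥ H x + c) j) := by
    funext x
    simp [j, ← hw, Matrix.mulVec]
  rw [SetLike.mem_coe, hf']
  exact coord_mem_readouts j

theorem NNHidden.exists_of_depth (n : ℕ) :
    ∃ (K : ℕ) (H : EuclideanSpace ℝ (Fin m) → Fin K → ℝ), NNHidden acts m W n K H := by
  induction n with
  | zero => exact ⟨m, _, .base⟩
  | succ n ih =>
    obtain ⟨K, H, hH⟩ := ih
    obtain ⟨K', H', hH', -⟩ := hH.exists_layer ∅ (by simp) (by simp)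
    exact ⟨K', H', hH'⟩

theorem IsNetwork.of_mem_readouts {D : ℕ} (hH : NNHidden acts m W (D - 1) K H)
    {f : EuclideanSpace ℝ (Fin m) → ℝ} (hf : f ∈ readouts H) : IsNetwork acts m D W f := by
  obtain ⟨w, c, hf⟩ := exists_eq_dotProduct_add_of_mem_readouts hf
  exact ⟨K, H, Matrix.of fun _ => w, c, hH, fun x => by simp [hf, Matrix.mulVec]⟩

theorem IsNetwork.const (D : ℕ) (c : ℝ) : IsNetwork acts m D W fun _ => c := by
  obtain ⟨K, H, hH⟩ := NNHidden.exists_of_depth (acts := acts) (m := m) (W := W) (D - 1)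
  have : (fun _ => c) = c • (1 : EuclideanSpace ℝ (Fin m) → ℝ) := by ext; simp
  exact .of_mem_readouts hH (this ▸ Submodule.smul_mem _ c one_mem_readouts)

theorem isNetwork_sum_sq_of_mem_span_one {D : ℕ} {δ : Type*} [Fintype δ]
    {t : δ → EuclideanSpace ℝ (Fin m) → ℝ} (ht : ∀ i, t i ∈ Submodule.span ℝ {1}) :
    IsNetwork acts m D W fun x => ∑ i, t i x ^ 2 := by
  choose c hc using fun i => Submodule.mem_span_singleton.1 (ht i)
  convert IsNetwork.const D (∑ i, c i ^ 2) using 2 with x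
  simp [← hc]

theorem NNHidden.exists_sum_sq_mem_readouts {δ : Type*} [Fintype δ]
    (hH : NNHidden acts m W n K H) (h₁ : relu1 ∈ acts) (h₂ : relu2 ∈ acts)
    (t : δ → EuclideanSpace ℝ (Fin m) → ℝ) (ht : ∀ i, t i ∈ readouts H)
    (hW : 2 * Fintype.card δ ≤ W) :
    ∃ (K' : ℕ) (H' : EuclideanSpace ℝ (Fin m) → Fin K' → ℝ),
      NNHidden acts m W (n + 2) K' H' ∧ ∑ i, t i ^ 2 ∈ readouts H' := by
  classical
  set S := univ.biUnion fun i => squareUnits (t i)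
  have hcard : #S ≤ W := card_biUnion_le.trans <| (sum_le_card_nsmul _ _ 2
    fun i _ => card_squareUnits_le (t i)).trans (by simpa [mul_comm] using hW)
  have hS : ↑S ⊆ neurons acts H := by
    simpa [S] using fun i => squareUnits_subset_neurons h₂ (ht i)
  obtain ⟨K₁, H₁, hH₁, hS₁⟩ := hH.exists_layer S hS hcard
  -- The second layer copies the first: `relu1` fixes the nonnegative units `relu2 ∘ ±t i`.
  have hS₁' : ↑S ⊆ neurons acts H₁ := fun f hf =>
    mem_neurons_of_nonneg h₁ (hS₁ hf) (by
      obtain ⟨i, -, hi⟩ := mem_biUnion.1 hf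
      exact squareUnits_nonneg hi)
  obtain ⟨K₂, H₂, hH₂, hS₂⟩ := hH₁.exists_layer S hS₁' hcard
  refine ⟨K₂, H₂, hH₂, sum_mem fun i _ => sq_mem_of_squareUnits_subset ?_⟩
  exact (coe_subset.2 (subset_biUnion_of_mem (fun i => squareUnits (t i)) (mem_univ i))).trans hS₂

end Network

section Tracking

variable {m : ℕ} {δ : Type*} [Fintype δ] (v : δ → EuclideanSpace ℝ (Fin m))

/-- Placed in the layer after `H`, the neurons `U` make the derivatives of `g` along the `v i`
affine readouts. -/
structure TracksDerivs {K k : ℕ} (H : EuclideanSpace ℝ (Fin m) → Fin K → ℝ)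
    (U : Finset (EuclideanSpace ℝ (Fin m) → ℝ)) (g : EuclideanSpace ℝ (Fin m) → Fin k → ℝ) :
    Prop where
  subset_neurons : ↑U ⊆ neurons {relu1, relu2} H
  dirDeriv_mem : ∀ i l, dirDeriv (v i) (fun x => g x l) ∈ Submodule.span ℝ (insert 1 ↑U)

/-- In the new layer, `relu1 ∘ z` and (through `U`) the derivatives of the pre-activations `z`
become readouts, so the derivatives `2 (relu1 ∘ z) ∂z` of `relu2 ∘ z` are read off the product
units `U'` one layer further up. -/
theorem TracksDerivs.exists_layer {W' n K k k' : ℕ} {H : EuclideanSpace ℝ (Fin m) → Fin K → ℝ}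
    {U : Finset (EuclideanSpace ℝ (Fin m) → ℝ)} {G : EuclideanSpace ℝ (Fin m) → Fin k → ℝ}
    (hU : TracksDerivs v H U G) (hH : NNHidden {relu1, relu2} m W' n K H)
    (hG : ∀ l, ContDiff ℝ 1 fun x => G x l) (hGH : ∀ l, (fun x => G x l) ∈ readouts H)
    (A : Matrix (Fin k') (Fin k) ℝ) (b : Fin k' → ℝ)
    (S : Finset (EuclideanSpace ℝ (Fin m) → ℝ)) (hS : ↑S ⊆ neurons {relu1, relu2} H)
    (hW : #S + k' + #U ≤ W') :
    ∃ (K' : ℕ) (H' : EuclideanSpace ℝ (Fin m) → Fin K' → ℝ) (U' : Finset _),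
      NNHidden {relu1, relu2} m W' (n + 1) K' H' ∧
      ↑S ⊆ (readouts H' : Set (EuclideanSpace ℝ (Fin m) → ℝ)) ∧
      TracksDerivs v H' U' (fun x j => relu2 ((A *ᵥ G x + b) j)) ∧
      #U' ≤ 4 * (Fintype.card δ * k') := by
  classical
  set z : Fin k' → EuclideanSpace ℝ (Fin m) → ℝ := fun j x => (A *ᵥ G x + b) j
  have hzG (j : Fin k') : z j ∈ readouts G := mulVec_apply_add_mem_readouts A j (b j)
  have hzH (j : Fin k') : z j ∈ readouts H := readouts_le_readouts hGH (hzG j)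
  set R := univ.image fun j => relu1 ∘ z j
  have hR : ↑R ⊆ neurons {relu1, relu2} H := by
    simpa [R, Set.range_subset_iff] using fun j => ⟨relu1, by simp, z j, hzH j, rfl⟩
  have hcard : #(S ∪ R ∪ U) ≤ W' := by
    have := card_union_le (S ∪ R) U
    have := card_union_le S R
    have : #R ≤ k' := card_image_le.trans (by rw [card_univ, Fintype.card_fin])
    omega
  obtain ⟨K', H', hH', hH'⟩ := hH.exists_layer (S ∪ R ∪ U)
    (by
      rw [coe_union, coe_union]
      exact Set.union_subset (Set.union_subset hS hR) hU.subset_neurons)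
    hcard
  simp only [coe_union, Set.union_subset_iff] at hH'
  obtain ⟨⟨hSH', hRH'⟩, hUH'⟩ := hH'
  have hrelu1 (j : Fin k') : relu1 ∘ z j ∈ readouts H' := hRH' (by simp [R])
  have hderiv (i : δ) (j : Fin k') : dirDeriv (v i) (z j) ∈ readouts H' :=
    dirDeriv_mem_of_mem_readouts (fun l => (hG l).differentiable one_ne_zero)
      (fun l => span_insert_one_le_readouts hUH' (hU.dirDeriv_mem i l)) (hzG j)
  set U' := univ.biUnion fun p : δ × Fin k' =>
    productUnits (relu1 ∘ z p.2) (dirDeriv (v p.1) (z p.2))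
  refine ⟨K', H', U', hH', hSH', ⟨?_, fun i j => ?_⟩, ?_⟩
  · intro f hf
    obtain ⟨p, -, hp⟩ := mem_biUnion.1 hf
    exact productUnits_subset_neurons (by simp) (hrelu1 p.2) (hderiv p.1 p.2) hp
  · have hz : Differentiable ℝ (z j) :=
      (contDiff_of_mem_readouts hG (hzG j)).differentiable one_ne_zero
    have hsub : productUnits (relu1 ∘ z j) (dirDeriv (v i) (z j)) ⊆ U' :=
      fun f hf => mem_biUnion.2 ⟨(i, j), mem_univ _, hf⟩
    have hspan : (U' : Set (EuclideanSpace ℝ (Fin m) → ℝ)) ⊆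
        Submodule.span ℝ (insert 1 (U' : Set (EuclideanSpace ℝ (Fin m) → ℝ))) :=
      (Set.subset_insert 1 _).trans Submodule.subset_span
    change dirDeriv (v i) (relu2 ∘ z j) ∈ _
    rw [dirDeriv_relu2_comp hz]
    exact Submodule.smul_mem _ _
      (mul_mem_of_productUnits_subset ((coe_subset.2 hsub).trans hspan))
  · refine card_biUnion_le.trans ((sum_le_card_nsmul _ _ 4 fun p _ =>
      card_productUnits_le _ _).trans ?_)
    simp [mul_comm]

theorem NNHidden.exists_tracksDerivs {W W' n k : ℕ}
    {g : EuclideanSpace ℝ (Fin m) → Fin k → ℝ} (hg : NNHidden {relu2} m W n k g)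
    (hW₁ : 2 * W ≤ W') (hW₂ : 1 < n → 2 * W + 4 * (Fintype.card δ * W) ≤ W') :
    ∃ (K : ℕ) (H : EuclideanSpace ℝ (Fin m) → Fin K → ℝ) (U : Finset _),
      NNHidden {relu1, relu2} m W' n K H ∧ (∀ l, (fun x => g x l) ∈ readouts H) ∧
      TracksDerivs v H U g ∧ #U ≤ if n = 0 then 0 else 4 * (Fintype.card δ * W) := by
  classical
  induction hg with
  | base =>
    refine ⟨m, _, ∅, .base, coord_mem_readouts, ⟨by simp, fun i l => ?_⟩, by simp⟩
    simpa [dirDeriv_coord] using const_mem_span_one (v i l)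
  | @layer n k k' g hg A b ρ hρ hk ih =>
    obtain rfl : ρ = fun _ => relu2 := funext hρ
    obtain ⟨K, H, U, hH, hgH, hU, hUcard⟩ := ih fun hn => hW₂ (by omega)
    set S := univ.image fun j x => relu2 ((A *ᵥ g x + b) j)
    have hS : ↑S ⊆ neurons {relu1, relu2} H := by
      simpa [S, Set.range_subset_iff] using fun j => ⟨relu2, by simp, _,
        readouts_le_readouts hgH (mulVec_apply_add_mem_readouts A j (b j)), rfl⟩
    have hScard : #S ≤ W := card_image_le.trans (by simpa using hk)
    obtain ⟨K', H', U', hH', hSH', hU', hU'card⟩ :=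
      hU.exists_layer v hH (hg.contDiff_apply (by simpa using contDiff_relu2)) hgH A b S hS
        (by split_ifs at hUcard <;> grind)
    refine ⟨K', H', U', hH', fun j => hSH' (by simp [S]), hU', ?_⟩
    simpa using hU'card.trans (by gcongr)

theorem isNetwork_sum_sq_dirDeriv {N W k : ℕ} {g : EuclideanSpace ℝ (Fin m) → Fin k → ℝ}
    (hg : NNHidden {relu2} m W (N + 1) k g) {u : EuclideanSpace ℝ (Fin m) → ℝ}
    (hu : u ∈ readouts g) (hδ : 0 < Fintype.card δ) (hW : 0 < W) :
    IsNetwork {relu1, relu2} m (N + 5) (Fintype.card δ * (N + 4) * W)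
      fun x => ∑ i, dirDeriv (v i) u x ^ 2 := by
  have hgC := hg.contDiff_apply (by simpa using contDiff_relu2)
  cases hg with
  | layer hg A b ρ hρ hk =>
  obtain rfl : ρ = fun _ => relu2 := funext hρ
  have hcW : W ≤ Fintype.card δ * W := Nat.le_mul_of_pos_left W hδ
  have hc : Fintype.card δ ≤ Fintype.card δ * W := Nat.le_mul_of_pos_right _ hW
  have hck : Fintype.card δ * k ≤ Fintype.card δ * W := Nat.mul_le_mul_left _ hk
  have hW' : Fintype.card δ * (N + 4) * W =
      N * (Fintype.card δ * W) + 4 * (Fintype.card δ * W) := by ring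
  obtain ⟨K, H, U, hH, hgH, hU, hUcard⟩ := hg.exists_tracksDerivs v
    (W' := Fintype.card δ * (N + 4) * W) (by nlinarith) fun hN => by nlinarith
  -- Nothing reads the values of the last `ReLU²` layer, so it gets no `relu2` units.
  obtain ⟨K₁, H₁, U₁, hH₁, -, hU₁, hU₁card⟩ :=
    hU.exists_layer v hH (hg.contDiff_apply (by simpa using contDiff_relu2)) hgH A b ∅ (by simp)
      (by
        rw [card_empty, zero_add]
        split_ifs at hUcard with hN
        · nlinarith
        · nlinarith [Nat.pos_of_ne_zero hN])
  obtain ⟨K₂, H₂, hH₂, hU₁H₂⟩ := hH₁.exists_layer U₁ hU₁.subset_neurons (by nlinarith)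
  have hpartial (i : δ) : dirDeriv (v i) u ∈ readouts H₂ :=
    dirDeriv_mem_of_mem_readouts (fun l => (hgC l).differentiable one_ne_zero)
      (fun l => span_insert_one_le_readouts hU₁H₂ (hU₁.dirDeriv_mem i l)) hu
  obtain ⟨K₃, H₃, hH₃, hsum⟩ :=
    hH₂.exists_sum_sq_mem_readouts (by simp) (by simp) _ hpartial (by nlinarith)
  refine IsNetwork.of_mem_readouts hH₃ ?_
  convert hsum using 1
  ext x
  simp

end Tracking

/-- **The squared gradient norm of a `ReLU²` network is a `ReLU`–`ReLU²` network
(claim in Lemma 3.10).**  If `u : ℝ^d → ℝ` is implemented by a `ReLU²` network of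
depth `D` and width `W`, then `u` is `C¹` and `x ↦ ‖∇u(x)‖₂²` is implemented
exactly by a `ReLU`–`ReLU²` network of depth `D + 3` and width at most
`d·(D+2)·W`. -/
theorem grad_norm_sq_is_relu_relu2_network (d D W : ℕ)
    (u : EuclideanSpace ℝ (Fin d) → ℝ)
    (hu : IsNetwork {relu2} d D W u) :
    ContDiff ℝ 1 u ∧
    ∃ g : EuclideanSpace ℝ (Fin d) → ℝ,
      IsNetwork {relu1, relu2} d (D + 3) (d * (D + 2) * W) g ∧
      ∀ x, g x = ‖gradient u x‖^2 := by
  obtain ⟨k, g, a, b, hg, hu⟩ := hu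
  have hug : u ∈ readouts g := funext hu ▸ mulVec_apply_add_mem_readouts a 0 b
  have hgC := hg.contDiff_apply (by simpa using contDiff_relu2)
  refine ⟨contDiff_of_mem_readouts hgC hug, _, ?_, fun x => (norm_gradient_sq_eq_sum u x).symm⟩
  have of_const_partials (hV : ∀ i l, dirDeriv (EuclideanSpace.single i 1) (fun x => g x l) ∈
      Submodule.span ℝ {1}) := isNetwork_sum_sq_of_mem_span_one (acts := {relu1, relu2})
    (D := D + 3) (W := d * (D + 2) * W) fun i => dirDeriv_mem_of_mem_readouts
      (fun l => (hgC l).differentiable one_ne_zero) (hV i) hug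
  obtain hD | ⟨N, rfl⟩ : D - 1 = 0 ∨ ∃ N, D = N + 2 := by
    rcases Nat.lt_or_ge D 2 with h | h
    exacts [.inl (by omega), .inr ⟨D - 2, by omega⟩]
  · rw [hD] at hg
    cases hg
    exact of_const_partials fun i l => by simpa [dirDeriv_coord] using const_mem_span_one _
  rcases Nat.eq_zero_or_pos d with rfl | hd
  · exact of_const_partials fun i => i.elim0
  rcases Nat.eq_zero_or_pos W with rfl | hW
  · obtain rfl : k = 0 := Nat.le_zero.1 hg.card_le
    exact of_const_partials fun i l => l.elim0
  simpa using isNetwork_sum_sq_dirDeriv (fun i => EuclideanSpace.single i 1) hg hug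
    (by simpa using hd) hW
end
end
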